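/- Let D₁ = [[e,0,0],[0,1,0],[0,1,1]] and D₂ = [[1/2,0,0],[0,1,0],[0,−ln 2,1]], acting as linear maps on ℝ³ (column vectors). If C ⊆ ℝ³ is a closed convex cone such that D₁(C) ⊆ C, D₂(C) ⊆ C, the point (1,1,0) belongs to C, and the point (1,−1,−1) belongs to the dual cone C*, then C = K_exp. -/

import Mathlib

open Real

/-- The exponential cone
`K_exp = {(x₁,x₂,x₃) : x₂ > 0, x₁ ≥ x₂·exp(x₃/x₂)} ∪ {(x₁,0,x₃) : x₁ ≥ 0, x₃ ≤ 0}`. -/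
def Kexp : Set (Fin 3 → ℝ) :=
  {x | 0 < x 1 ∧ x 1 * Real.exp (x 2 / x 1) ≤ x 0} ∪
  {x | x 1 = 0 ∧ 0 ≤ x 0 ∧ x 2 ≤ 0}

/-- The dual cone of `C ⊆ ℝ³` with respect to the standard inner product. -/
def dualCone (C : Set (Fin 3 → ℝ)) : Set (Fin 3 → ℝ) :=
  {y | ∀ x ∈ C, 0 ≤ y 0 * x 0 + y 1 * x 1 + y 2 * x 2}

/-- `D₁ = [[e,0,0],[0,1,0],[0,1,1]]` acting on column vectors. -/
noncomputable def D1 (x : Fin 3 → ℝ) : Fin 3 → ℝ :=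
  ![Real.exp 1 * x 0, x 1, x 1 + x 2]

/-- `D₂ = [[1/2,0,0],[0,1,0],[0,−ln 2,1]]` acting on column vectors. -/
noncomputable def D2 (x : Fin 3 → ℝ) : Fin 3 → ℝ :=
  ![(1 / 2) * x 0, x 1, -Real.log 2 * x 1 + x 2]

/-!
The curve `expCurve t = (eᵗ, 1, t)` generates `K_exp` as a closed convex cone, and `K_exp` is cut
out by the half-spaces `⟨dualExpCurve t, ·⟩ ≥ 0`, `dualExpCurve t = (eᵗ, -1 - t, -1)`. The maps
`D₁`, `D₂` and their transposes shift the parameter of these curves by `1` and by `-log 2`.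
Starting from `(1,1,0) = expCurve 0 ∈ C` and `(1,-1,-1) = dualExpCurve 0 ∈ C*`, the parameters
reached form the additive monoid generated by `1` and `-log 2`, which is dense because `log 2`
is irrational. As `C` and `C*` are closed, the whole curve lies in `C`, giving `K_exp ⊆ C`, and
the whole dual curve lies in `C*`, giving `C ⊆ K_exp`.
-/

open Filter Topology Set

/- If `eᵐ = a / b`, the Lindemann–Weierstrass approximations `n eᵐ - p g(m)` with `p ∤ n` turn
into nonzero integers `n a - p b g(m)` of absolute value at most `b cᵖ / (p - 1)!`, which is `< 1`
for large primes `p`. -/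
open Polynomial Nat in
theorem irrational_exp_intCast {m : ℤ} (hm : m ≠ 0) : Irrational (exp m) := by
  rintro ⟨q, hq⟩
  obtain ⟨c, hc⟩ := LindemannWeierstrass.exp_polynomial_approx (X - C m) (by simpa using hm)
  have hnum : 0 < q.num := Rat.num_pos.2 (by exact_mod_cast hq ▸ exp_pos m)
  have htend : Tendsto (fun p : ℕ => (q.den : ℝ) * (c * (c ^ (p - 1) / (p - 1)!))) atTop (𝓝 0) := by
    simpa using ((FloorSemiring.tendsto_pow_div_factorial_atTop c).comp
      (tendsto_sub_atTop_nat 1)).const_mul c |>.const_mul (q.den : ℝ)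
  obtain ⟨N, hN⟩ := eventually_atTop.1 (htend.eventually (gt_mem_nhds one_pos))
  obtain ⟨p, hpN, hp⟩ := Nat.exists_infinite_primes (max N (max m.natAbs q.num.natAbs + 1))
  obtain ⟨n, hpn, g, -, happrox⟩ := hc p (by simpa using (by omega : m.natAbs < p)) hp
  have hsmall := hN p (by omega)
  have hcp : c * c ^ (p - 1) = c ^ p := mul_pow_sub_one hp.ne_zero c
  rw [← mul_div_assoc, hcp] at hsmall
  specialize happrox (r := (m : ℂ)) (mem_aroots.2 ⟨X_sub_C_ne_zero m, by simp⟩)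
  set z : ℤ := n * q.num - p * (q.den * g.eval m)
  have hz : (z : ℂ) = q.den * (n • Complex.exp m - p • aeval (m : ℂ) g) := by
    have hexp : Complex.exp m = (q.num : ℂ) / q.den := by
      rw [← Complex.ofReal_intCast, ← Complex.ofReal_exp, ← hq, Rat.cast_def]; push_cast; rfl
    have hg : aeval (m : ℂ) g = ((g.eval m : ℤ) : ℂ) := by
      simpa using aeval_algebraMap_apply_eq_algebraMap_eval (A := ℂ) m g
    rw [hexp, hg, zsmul_eq_mul, nsmul_eq_mul]
    simp only [z]
    push_cast
    field_simp
  have hz0 : z ≠ 0 := by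
    intro h0
    have hdvd : (p : ℤ) ∣ n * q.num := by
      rw [sub_eq_zero] at h0
      exact ⟨_, h0⟩
    rcases (Nat.prime_iff_prime_int.mp hp).dvd_or_dvd hdvd with h | h
    · exact hpn h
    · have := Int.le_of_dvd hnum h; omega
  have : (1 : ℝ) ≤ q.den * (c ^ p / (p - 1)!) := by
    calc (1 : ℝ) ≤ |(z : ℝ)| := by exact_mod_cast Int.one_le_abs hz0
      _ = q.den * ‖n • Complex.exp m - p • aeval (m : ℂ) g‖ := by
        rw [← Complex.norm_intCast, hz, norm_mul, Complex.norm_natCast]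
      _ ≤ _ := by gcongr
  linarith

theorem irrational_log_two : Irrational (log 2) := by
  rintro ⟨q, hq⟩
  have hnum : q.num ≠ 0 := by
    rw [Rat.num_ne_zero]
    rintro rfl
    exact (log_pos one_lt_two).ne (by simpa using hq)
  apply irrational_exp_intCast hnum |>.ne_nat (2 ^ q.den)
  have : (q.num : ℝ) = q.den * log 2 := by
    rw [← hq, Rat.cast_def]; field_simp
  rw [this, exp_nat_mul, exp_log two_pos]; push_cast; rfl

theorem exists_natCast_mul_add_natCast_mul_abs_sub_lt {s b : ℝ} (hs : 0 < s) (hb : b < 0) (x : ℝ) :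
    ∃ n k : ℕ, |x - (n * b + k * s)| < s := by
  set n := ⌈x / b⌉₊
  have hnb : n * b ≤ x := by
    have := (div_le_iff_of_neg hb).1 (Nat.le_ceil (x / b))
    linarith
  set k := ⌊(x - n * b) / s⌋₊
  have hk₁ : k * s ≤ x - n * b := (le_div_iff₀ hs).1 (Nat.floor_le (div_nonneg (by linarith) hs.le))
  have hk₂ : x - n * b < (k + 1) * s := (div_lt_iff₀ hs).1 (Nat.lt_floor_add_one _)
  exact ⟨n, k, abs_lt.2 ⟨by linarith, by linarith⟩⟩

theorem exists_mem_addSubmonoidClosure_pair_abs_lt {a b : ℝ} (ha : 0 < a) (hb : b < 0)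
    (hab : Irrational (b / a)) {ε : ℝ} (hε : 0 < ε) :
    ∃ s ∈ AddSubmonoid.closure {a, b}, s ≠ 0 ∧ |s| < ε := by
  obtain ⟨N, hN⟩ := exists_nat_gt (a / ε)
  have hN0 : 0 < N := by exact_mod_cast (div_pos ha hε).trans hN
  obtain ⟨j, k, hk, -, hjk⟩ := Real.exists_int_int_abs_mul_sub_le (-(b / a)) hN0
  have hξ : 0 < k * -(b / a) :=
    mul_pos (by exact_mod_cast hk) (neg_pos.2 (div_neg_of_neg_of_pos hb ha))
  have hj : 0 ≤ j := by
    have : (1 : ℝ) / (N + 1) ≤ 1 := by rw [div_le_one (by positivity)]; linarith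
    have : (-1 : ℝ) < j := by linarith [(abs_le.1 hjk).2]
    have : (-1 : ℤ) < j := by exact_mod_cast this
    omega
  lift j to ℕ using hj
  lift k to ℕ using hk.le
  push_cast at hjk hξ
  have hs : (j : ℝ) * a + k * b = -a * (k * -(b / a) - j) := by field_simp; ring
  refine ⟨j * a + k * b, (AddSubmonoid.mem_closure_pair _ _ _).2 ⟨j, k, by simp [nsmul_eq_mul]⟩,
    ?_, ?_⟩
  · rw [hs]
    exact mul_ne_zero (neg_ne_zero.2 ha.ne')
      (sub_ne_zero.2 ((hab.neg.natCast_mul (by exact_mod_cast hk.ne')).ne_nat j))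
  · rw [hs, abs_mul, abs_neg, abs_of_pos ha]
    calc a * |k * -(b / a) - j| ≤ a * (1 / (N + 1)) := by gcongr
      _ < ε := by
        rw [div_lt_iff₀ hε] at hN
        rw [mul_one_div, div_lt_iff₀ (by positivity)]
        nlinarith

theorem dense_addSubmonoidClosure_pair {a b : ℝ} (ha : 0 < a) (hb : b < 0)
    (hab : Irrational (b / a)) : Dense (AddSubmonoid.closure {a, b} : Set ℝ) := by
  set M := AddSubmonoid.closure {a, b}
  have haM : a ∈ M := AddSubmonoid.subset_closure (by simp)
  have hbM : b ∈ M := AddSubmonoid.subset_closure (by simp)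
  rw [Metric.dense_iff]
  intro x ε hε
  obtain ⟨s, hsM, hs0, hsε⟩ := exists_mem_addSubmonoidClosure_pair_abs_lt ha hb hab hε
  have hmem : ∀ n k : ℕ, ∀ c ∈ M, (n : ℝ) * c + k * s ∈ M := fun n k c hc => by
    simpa [nsmul_eq_mul] using add_mem (M.nsmul_mem hc n) (M.nsmul_mem hsM k)
  rcases hs0.lt_or_gt with hneg | hpos
  · obtain ⟨n, k, h⟩ :=
      exists_natCast_mul_add_natCast_mul_abs_sub_lt (neg_pos.2 hneg) (neg_neg_of_pos ha) (-x)
    refine ⟨n * a + k * s, ?_, hmem n k a haM⟩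
    have hflip : n * a + k * s - x = -x - (n * -a + k * -s) := by ring
    rw [Metric.mem_ball, Real.dist_eq, hflip]
    exact h.trans (abs_of_neg hneg ▸ hsε)
  · obtain ⟨n, k, h⟩ := exists_natCast_mul_add_natCast_mul_abs_sub_lt hpos hb x
    refine ⟨n * b + k * s, ?_, hmem n k b hbM⟩
    rw [Metric.mem_ball, Real.dist_eq, abs_sub_comm]
    exact h.trans (abs_of_pos hpos ▸ hsε)

theorem eq_univ_of_isClosed_of_forall_add_mem {T : Set ℝ} {a b : ℝ} (ha : 0 < a) (hb : b < 0)
    (hab : Irrational (b / a)) (hT : IsClosed T) (h0 : 0 ∈ T) (hTa : ∀ t ∈ T, t + a ∈ T)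
    (hTb : ∀ t ∈ T, t + b ∈ T) : T = univ := by
  have hsub : (AddSubmonoid.closure {a, b} : Set ℝ) ⊆ T := by
    intro s hs
    suffices ∀ t ∈ T, t + s ∈ T by simpa using this 0 h0
    induction hs using AddSubmonoid.closure_induction with
    | mem x hx =>
      rcases hx with rfl | rfl
      exacts [hTa, hTb]
    | zero => simp
    | add x y _ _ hx hy => exact fun t ht => by simpa [add_assoc] using hy _ (hx t ht)
  rw [← univ_subset_iff, ← (dense_addSubmonoidClosure_pair ha hb hab).closure_eq]
  exact hT.closure_subset_iff.2 hsub

noncomputable def expCurve (t : ℝ) : Fin 3 → ℝ := ![exp t, 1, t]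

noncomputable def dualExpCurve (t : ℝ) : Fin 3 → ℝ := ![exp t, -1 - t, -1]

theorem continuous_expCurve : Continuous expCurve := by
  unfold expCurve; fun_prop

theorem continuous_dualExpCurve : Continuous dualExpCurve := by
  unfold dualExpCurve; fun_prop

theorem isClosed_dualCone (C : Set (Fin 3 → ℝ)) : IsClosed (dualCone C) := by
  simp only [dualCone, ofPred_forall]
  exact isClosed_biInter fun x _ => isClosed_le continuous_const (by fun_prop)

theorem D1_expCurve (t : ℝ) : D1 (expCurve t) = expCurve (t + 1) := by
  ext i; fin_cases i <;> simp [D1, expCurve, exp_add, mul_comm, add_comm]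

theorem D2_expCurve (t : ℝ) : D2 (expCurve t) = expCurve (t + -log 2) := by
  ext i; fin_cases i <;> simp [D2, expCurve, exp_add, exp_neg, exp_log two_pos] <;> ring

theorem dualExpCurve_add_one_mem {C : Set (Fin 3 → ℝ)} (hD1 : MapsTo D1 C C) {t : ℝ}
    (h : dualExpCurve t ∈ dualCone C) : dualExpCurve (t + 1) ∈ dualCone C := by
  intro x hx
  have := h _ (hD1 hx)
  simp only [dualExpCurve, D1, Matrix.cons_val_zero, Matrix.cons_val_one, Matrix.cons_val] at this ⊢
  rw [exp_add]; linarith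

theorem dualExpCurve_add_neg_log_two_mem {C : Set (Fin 3 → ℝ)} (hD2 : MapsTo D2 C C) {t : ℝ}
    (h : dualExpCurve t ∈ dualCone C) : dualExpCurve (t + -log 2) ∈ dualCone C := by
  intro x hx
  have := h _ (hD2 hx)
  simp only [dualExpCurve, D2, Matrix.cons_val_zero, Matrix.cons_val_one, Matrix.cons_val] at this ⊢
  rw [exp_add, exp_neg, exp_log two_pos]; linarith

theorem mem_Kexp_of_forall_le {x : Fin 3 → ℝ} (h : ∀ t, (1 + t) * x 1 + x 2 ≤ exp t * x 0) :
    x ∈ Kexp := by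
  rcases lt_trichotomy (x 1) 0 with hneg | hzero | hpos
  · set t := (|x 0| + |x 2| + 1) / x 1 - 1
    have ht : (1 + t) * x 1 = |x 0| + |x 2| + 1 := by simp only [t]; field_simp [hneg.ne]; ring
    have hexp : exp t * x 0 ≤ |x 0| :=
      calc exp t * x 0 ≤ exp t * |x 0| := by gcongr; exact le_abs_self _
        _ ≤ 1 * |x 0| := by
          gcongr
          have : (|x 0| + |x 2| + 1) / x 1 < 0 := div_neg_of_pos_of_neg (by positivity) hneg
          exact exp_le_one_iff.2 (by linarith)
        _ = |x 0| := one_mul _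
    linarith [h t, neg_abs_le (x 2)]
  · have h' : ∀ t, x 2 ≤ exp t * x 0 := fun t => by simpa [hzero] using h t
    refine Or.inr ⟨hzero, ?_, ?_⟩
    · have hlim : Tendsto (fun t => x 2 * exp (-t)) atTop (𝓝 0) := by
        simpa using tendsto_exp_neg_atTop_nhds_zero.const_mul (x 2)
      refine le_of_tendsto' hlim fun t => ?_
      calc x 2 * exp (-t) ≤ exp t * x 0 * exp (-t) := by gcongr; exact h' t
        _ = x 0 := by rw [mul_right_comm, ← exp_add, add_neg_cancel, exp_zero, one_mul]
    · exact ge_of_tendsto' (by simpa using tendsto_exp_atBot.mul_const (x 0)) h'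
  · refine Or.inl ⟨hpos, ?_⟩
    have := h (-(x 2 / x 1))
    have hx1 : (1 + -(x 2 / x 1)) * x 1 + x 2 = x 1 := by field_simp; ring
    rw [hx1, exp_neg, ← div_eq_inv_mul, le_div_iff₀ (exp_pos _)] at this
    exact this

theorem add_mem_of_convex_of_smul_mem {E : Type*} [AddCommGroup E] [Module ℝ E] {C : Set E}
    (hconv : Convex ℝ C) (hcone : ∀ (c : ℝ) (x : E), 0 ≤ c → x ∈ C → c • x ∈ C) {u v : E}
    (hu : u ∈ C) (hv : v ∈ C) : u + v ∈ C := by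
  have := hcone 2 _ zero_le_two (hconv hu hv one_half_pos.le one_half_pos.le (add_halves 1))
  rwa [smul_add, smul_smul, smul_smul, mul_one_div_cancel two_ne_zero, one_smul, one_smul] at this

section ClosedConvexCone

variable {C : Set (Fin 3 → ℝ)} (hclosed : IsClosed C)
  (hcone : ∀ (c : ℝ) (x : Fin 3 → ℝ), 0 ≤ c → x ∈ C → c • x ∈ C)
  (hcurve : ∀ t, expCurve t ∈ C)
include hclosed hcone hcurve

theorem single_zero_mem_of_expCurve_mem : ![1, 0, 0] ∈ C := by
  refine hclosed.mem_of_tendsto (f := fun t => exp (-t) • expCurve t) (b := atTop) ?_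
    (.of_forall fun t => hcone _ _ (exp_pos _).le (hcurve t))
  refine tendsto_pi_nhds.2 fun i => ?_
  fin_cases i
  · simp [expCurve, ← exp_add]
  · simpa [expCurve] using tendsto_exp_neg_atTop_nhds_zero
  · simpa [expCurve, mul_comm] using tendsto_pow_mul_exp_neg_atTop_nhds_zero 1

theorem neg_single_two_mem_of_expCurve_mem : ![0, 0, -1] ∈ C := by
  refine hclosed.mem_of_tendsto (f := fun t => t⁻¹ • expCurve (-t)) (b := atTop) ?_
    ((eventually_gt_atTop 0).mono fun t ht => hcone _ _ (inv_pos.2 ht).le (hcurve _))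
  refine tendsto_pi_nhds.2 fun i => ?_
  fin_cases i
  · simpa [expCurve] using tendsto_inv_atTop_zero.mul tendsto_exp_neg_atTop_nhds_zero
  · simpa [expCurve] using tendsto_inv_atTop_zero
  · refine tendsto_const_nhds.congr' ((eventually_gt_atTop 0).mono fun t ht => ?_)
    simp [expCurve, ht.ne']

theorem Kexp_subset_of_expCurve_mem (hconv : Convex ℝ C) : Kexp ⊆ C := by
  have hadd {u v : Fin 3 → ℝ} (hu : u ∈ C) (hv : v ∈ C) : u + v ∈ C :=
    add_mem_of_convex_of_smul_mem hconv hcone hu hv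
  have he₀ := single_zero_mem_of_expCurve_mem hclosed hcone hcurve
  have he₂ := neg_single_two_mem_of_expCurve_mem hclosed hcone hcurve
  rintro x (⟨hpos, hx⟩ | ⟨hzero, hx₀, hx₂⟩)
  · have hdecomp : x = x 1 • expCurve (x 2 / x 1) + (x 0 - x 1 * exp (x 2 / x 1)) • ![1, 0, 0] := by
      ext i; fin_cases i <;> simp [expCurve, mul_div_cancel₀ _ hpos.ne']
    rw [hdecomp]
    exact hadd (hcone _ _ hpos.le (hcurve _)) (hcone _ _ (by linarith) he₀)
  · have hdecomp : x = x 0 • ![1, 0, 0] + (-x 2) • ![0, 0, -1] := by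
      ext i; fin_cases i <;> simp [hzero]
    rw [hdecomp]
    exact hadd (hcone _ _ hx₀ he₀) (hcone _ _ (by linarith) he₂)

end ClosedConvexCone

/-- Any closed convex cone `C` stable under `D₁` and `D₂`, containing `(1,1,0)` and with
`(1,−1,−1)` in its dual cone, equals the exponential cone. -/
theorem stable_cone_eq_Kexp (C : Set (Fin 3 → ℝ))
    (hclosed : IsClosed C) (hconv : Convex ℝ C)
    (hcone : ∀ (c : ℝ) (x : Fin 3 → ℝ), 0 ≤ c → x ∈ C → c • x ∈ C)
    (hD1 : Set.MapsTo D1 C C) (hD2 : Set.MapsTo D2 C C)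
    (hτ : (![1, 1, 0] : Fin 3 → ℝ) ∈ C)
    (hπ : (![1, -1, -1] : Fin 3 → ℝ) ∈ dualCone C) :
    C = Kexp := by
  have hlog : -log 2 < 0 := neg_neg_of_pos (log_pos one_lt_two)
  have hirr : Irrational (-log 2 / 1) := by simpa using irrational_log_two.neg
  have hcurve : ∀ t, expCurve t ∈ C := eq_univ_iff_forall.1 <|
    eq_univ_of_isClosed_of_forall_add_mem (T := expCurve ⁻¹' C) one_pos hlog hirr
      (hclosed.preimage continuous_expCurve) (by simpa [expCurve] using hτ)
      (fun t ht => by simpa [D1_expCurve] using hD1 ht)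
      (fun t ht => by simpa [D2_expCurve] using hD2 ht)
  have hdual : ∀ t, dualExpCurve t ∈ dualCone C := eq_univ_iff_forall.1 <|
    eq_univ_of_isClosed_of_forall_add_mem (T := dualExpCurve ⁻¹' dualCone C) one_pos hlog hirr
      ((isClosed_dualCone C).preimage continuous_dualExpCurve)
      (by simpa [dualExpCurve] using hπ)
      (fun t ht => dualExpCurve_add_one_mem hD1 ht)
      (fun t ht => dualExpCurve_add_neg_log_two_mem hD2 ht)
  refine Subset.antisymm (fun x hx => mem_Kexp_of_forall_le fun t => ?_)
    (Kexp_subset_of_expCurve_mem hclosed hcone hcurve hconv)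
  have := hdual t x hx
  simp only [dualExpCurve, Matrix.cons_val_zero, Matrix.cons_val_one, Matrix.cons_val] at this
  linarith
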